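/- Let G be a compact Hausdorff topological group with an abelian closed normal subgroup A. Suppose g ∈ G normalizes A and g has a countable Engel sink in the group A⟨g⟩. Then g has a finite Engel sink in A⟨g⟩. -/

import Mathlib

/-- The left-normed iterated commutator `[x, ₙg]`: `engel g x 0 = x` and
`engel g x (n+1) = [engel g x n, g] = (engel g x n)⁻¹ * g⁻¹ * (engel g x n) * g`. -/
def engel {G : Type*} [Group G] (g x : G) : ℕ → G
  | 0 => x
  | n + 1 => (engel g x n)⁻¹ * g⁻¹ * engel g x n * g

/-- `E` is an Engel sink of `g`: for every `x` all sufficiently long commutators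
`[x, ₙg]` lie in `E`. -/
def IsEngelSink {G : Type*} [Group G] (g : G) (E : Set G) : Prop :=
  ∀ x : G, ∃ N : ℕ, ∀ n : ℕ, N ≤ n → engel g x n ∈ E

/-!
For `a ∈ A` the map `a ↦ [a, g]` is a continuous endomorphism `φ` of `A`, because `A` is abelian
and normalized by `g`; moreover `[x, g] ∈ A` for every `x ∈ A⟨g⟩`, so `[x, ₙ₊₁g] = φⁿ [x, g]`.
The countable sink writes the compact group `A` as a countable union of closed fibres of the
powers `φⁿ`. By Baire one fibre has interior, so some `ker φᴺ` is open, hence of finite index in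
`A`. Then `φᴺ(A)` is finite, and it is an Engel sink of `g` in `A⟨g⟩`.
-/
open Filter Function Set Topology

theorem map_engel {G H F : Type*} [Group G] [Group H] [FunLike F G H] [MonoidHomClass F G H]
    (f : F) (g x : G) (n : ℕ) : f (engel g x n) = engel (f g) (f x) n := by
  induction n with
  | zero => rfl
  | succ n ih => simp only [engel, map_mul, map_inv, ih]

theorem engel_succ' {G : Type*} [Group G] (g x : G) (n : ℕ) :
    engel g x (n + 1) = engel g (engel g x 1) n := by
  induction n with
  | zero => rfl
  | succ n ih => rw [engel, ih]; rfl

namespace Subgroup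

variable {G : Type*} [Group G] {A : Subgroup G} {g : G}

@[simp]
theorem coe_engel (H : Subgroup G) (g x : H) (n : ℕ) :
    ((engel g x n : H) : G) = engel (g : G) x n :=
  map_engel H.subtype g x n

theorem mem_normalizer_of_isClosed [TopologicalSpace G] [IsTopologicalGroup G] [CompactSpace G]
    (hA : IsClosed (A : Set G)) (hg : ∀ a ∈ A, g⁻¹ * a * g ∈ A) : g ∈ normalizer A := by
  have hpow : ∀ n : ℕ, ∀ a ∈ A, (g ^ n)⁻¹ * a * g ^ n ∈ A := by
    intro n
    induction n with
    | zero => simp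
    | succ n ih => intro a ha; simpa [pow_succ, mul_assoc] using hg _ (ih a ha)
  refine mem_normalizer_iff''.2 fun a => ⟨hg a, fun ha => ?_⟩
  -- `g⁻¹` is a limit of positive powers of `g`, so conjugation by `g⁻¹` also preserves `A`.
  have hinv : g⁻¹ ∈ _root_.closure (range (g ^ · : ℕ → G)) := by
    rw [← closure_range_zpow_eq_pow]
    exact _root_.subset_closure ⟨-1, zpow_neg_one g⟩
  have hclosed : IsClosed {x : G | x⁻¹ * (g⁻¹ * a * g) * x ∈ A} :=
    hA.preimage (by fun_prop)
  have hsub : range (g ^ · : ℕ → G) ⊆ {x : G | x⁻¹ * (g⁻¹ * a * g) * x ∈ A} :=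
    range_subset_iff.2 fun n => hpow n _ ha
  simpa [mul_assoc] using _root_.closure_minimal hsub hclosed hinv

theorem engel_one_mem_of_mem_sup_zpowers (hg : g ∈ normalizer A) {x : G}
    (hx : x ∈ A ⊔ zpowers g) : engel g x 1 ∈ A := by
  rw [← SetLike.mem_coe, coe_mul_of_right_le_normalizer_left A _ (zpowers_le.2 hg)] at hx
  obtain ⟨a, ha, _, ⟨k, rfl⟩, rfl⟩ := hx
  have hcomm : engel g (a * g ^ k) 1 = (g ^ k)⁻¹ * (a⁻¹ * (g⁻¹ * a * g)) * g ^ k := by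
    simp only [engel]; group
  rw [hcomm, ← mem_normalizer_iff''.1 (zpow_mem hg k)]
  exact mul_mem (inv_mem ha) ((mem_normalizer_iff''.1 hg a).1 ha)

end Subgroup

section AbelianNormalized

variable {G : Type*} [Group G] (A : Subgroup G) (hab : ∀ a ∈ A, ∀ b ∈ A, a * b = b * a)
  (g : G) (hg : ∀ a ∈ A, g⁻¹ * a * g ∈ A)

def engelHom : Monoid.End A where
  toFun a := ⟨a⁻¹ * g⁻¹ * a * g, by simpa [mul_assoc] using A.mul_mem (A.inv_mem a.2) (hg a a.2)⟩
  map_one' := by ext; simp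
  map_mul' a b := by
    ext
    have := hab _ (A.inv_mem b.2) _ (A.mul_mem (A.inv_mem a.2) (hg a a.2))
    simp only [Subgroup.coe_mul, Subgroup.coe_inv, mul_inv_rev] at this ⊢
    calc (b : G)⁻¹ * (a : G)⁻¹ * g⁻¹ * (a * b) * g
        = (b : G)⁻¹ * ((a : G)⁻¹ * (g⁻¹ * a * g)) * (g⁻¹ * b * g) := by group
      _ = (a : G)⁻¹ * (g⁻¹ * a * g) * (b : G)⁻¹ * (g⁻¹ * b * g) := by rw [this]
      _ = (a : G)⁻¹ * g⁻¹ * a * g * ((b : G)⁻¹ * g⁻¹ * b * g) := by group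

theorem coe_engelHom_pow_apply (n : ℕ) (a : A) :
    ((engelHom A hab g hg ^ n) a : G) = engel g a n := by
  induction n with
  | zero => rfl
  | succ n ih =>
    rw [Monoid.End.coe_pow] at ih
    rw [Monoid.End.coe_pow, iterate_succ_apply', engel, ← ih]
    rfl

theorem continuous_engelHom [TopologicalSpace G] [IsTopologicalGroup G] :
    Continuous (engelHom A hab g hg) :=
  Continuous.subtype_mk (by fun_prop) _

end AbelianNormalized

namespace MonoidHom

variable {K L : Type*} [Group K] [TopologicalSpace K] [ContinuousMul K] [Group L]

theorem exists_isOpen_ker_of_countable_sink {ι : Type*} [Countable ι] [BaireSpace K]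
    [TopologicalSpace L] [T1Space L] {ψ : ι → K →* L} (hψ : ∀ i, Continuous (ψ i)) {E : Set L}
    (hE : E.Countable) (hsink : ∀ k, ∃ i, ψ i k ∈ E) : ∃ i, IsOpen ((ψ i).ker : Set K) := by
  have := hE.to_subtype
  obtain ⟨⟨i, e⟩, u, hu⟩ := nonempty_interior_of_iUnion_of_closed
    (f := fun p : ι × E => ψ p.1 ⁻¹' {(p.2 : L)})
    (fun p => isClosed_singleton.preimage (hψ p.1))
    (eq_univ_of_forall fun k => by
      obtain ⟨i, hi⟩ := hsink k
      exact mem_iUnion.2 ⟨(i, ⟨_, hi⟩), rfl⟩)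
  -- The fibre through `u` is the coset `u * ker (ψ i)`, and it is a neighbourhood of `u`.
  have hnhds : (u * ·) ⁻¹' (ψ i ⁻¹' {(e : L)}) ∈ 𝓝 (1 : K) :=
    (continuous_const_mul u).continuousAt.preimage_mem_nhds
      (by simpa using mem_interior_iff_mem_nhds.1 hu)
  refine ⟨i, Subgroup.isOpen_of_mem_nhds _ (mem_of_superset hnhds fun x hx => ?_)⟩
  have hu' : ψ i u = e := interior_subset (s := ψ i ⁻¹' {(e : L)}) hu
  simp only [mem_preimage, mem_singleton_iff, map_mul, ← hu'] at hx
  simpa using hx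

theorem finite_range_of_isOpen_ker [CompactSpace K] (ψ : K →* L)
    (h : IsOpen (ψ.ker : Set K)) : (Set.range ψ).Finite := by
  have := Subgroup.quotient_finite_of_isOpen _ h
  exact (Set.finite_range (QuotientGroup.kerLift ψ)).subset
    (Set.range_subset_iff.2 fun k => ⟨k, rfl⟩)

end MonoidHom

/-- Let `G` be a compact Hausdorff group, `A` a closed abelian normal subgroup, and `g ∈ G`.
If `g` has a countable Engel sink in the subgroup `A⟨g⟩`, then `g` has a finite Engel sink
in `A⟨g⟩`. -/
theorem finite_sink_in_abelian_by_cyclic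
    {G : Type*} [Group G] [TopologicalSpace G] [IsTopologicalGroup G]
    [CompactSpace G] [T2Space G]
    (A : Subgroup G) (hA : IsClosed (A : Set G))
    (hab : ∀ a ∈ A, ∀ b ∈ A, a * b = b * a)
    (g : G) (hnorm : ∀ a ∈ A, g⁻¹ * a * g ∈ A)
    (E : Set (A ⊔ Subgroup.zpowers g : Subgroup G))
    (hcount : E.Countable)
    (hE : IsEngelSink
      (⟨g, Subgroup.mem_sup_right (Subgroup.mem_zpowers g)⟩ :
        (A ⊔ Subgroup.zpowers g : Subgroup G)) E) :
    ∃ F : Set (A ⊔ Subgroup.zpowers g : Subgroup G),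
      IsEngelSink
        (⟨g, Subgroup.mem_sup_right (Subgroup.mem_zpowers g)⟩ :
          (A ⊔ Subgroup.zpowers g : Subgroup G)) F ∧ F.Finite := by
  have : CompactSpace A := isCompact_iff_compactSpace.mp hA.isCompact
  set f := engelHom A hab g hnorm
  have hsink (a : A) : ∃ n, (f ^ n) a ∈ Subtype.val ⁻¹' (Subtype.val '' E) := by
    obtain ⟨n, hn⟩ := hE ⟨a, Subgroup.mem_sup_left a.2⟩
    exact ⟨n, _, hn n le_rfl, by rw [Subgroup.coe_engel, coe_engelHom_pow_apply]⟩
  obtain ⟨N, hN⟩ := MonoidHom.exists_isOpen_ker_of_countable_sink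
    (fun n => (continuous_engelHom A hab g hnorm).iterate n)
    ((hcount.image _).preimage Subtype.val_injective) hsink
  refine ⟨Subgroup.inclusion le_sup_left '' Set.range (f ^ N), fun x => ⟨N + 1, fun n hn => ?_⟩,
    ((f ^ N).finite_range_of_isOpen_ker hN).image _⟩
  obtain ⟨m, rfl⟩ := Nat.exists_eq_add_of_le' hn
  have hx : engel g x 1 ∈ A :=
    Subgroup.engel_one_mem_of_mem_sup_zpowers (Subgroup.mem_normalizer_of_isClosed hA hnorm) x.2
  refine ⟨(f ^ N) ((f ^ m) ⟨_, hx⟩), ⟨_, rfl⟩, Subtype.ext ?_⟩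
  have hpow := coe_engelHom_pow_apply A hab g hnorm (N + m) ⟨_, hx⟩
  rw [pow_add] at hpow
  rw [Subgroup.coe_inclusion, Subgroup.coe_engel, ← add_assoc, add_comm m N,
    engel_succ' _ _ (N + m)]
  exact hpow
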